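/- Suppose W₁₁, W₂₂, W₁₂, T₁₂ are real numbers in the set 𝒥_C, i.e., L₁ ≤ W₁₁ ≤ U₁, L₂ ≤ W₂₂ ≤ U₂, L₁₂ W₁₂ ≤ T₁₂ ≤ U₁₂ W₁₂, W₁₂ ≥ 0, W₁₁ W₂₂ = W₁₂² + T₁₂² (with 0 ≤ L₁ ≤ U₁, 0 ≤ L₂ ≤ U₂, L₁₂ ≤ U₁₂). Then with coefficients π₀,…,π₄ as in the convex-hull description, π₀ + π₁ W₁₁ + π₂ W₂₂ + π₃ W₁₂ + π₄ T₁₂ ≥ L₂ W₁₁ + L₁ W₂₂ - L₁ L₂. -/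

import Mathlib

noncomputable def f (x : ℝ) : ℝ := if x = 0 then 0 else (Real.sqrt (1 + x ^ 2) - 1) / x

/-!
Put `a, b, c, d, x, y` for the square roots of `L₁, U₁, L₂, U₂, W₁₁, W₂₂`, so that
`x * y = √(W₁₁ * W₂₂) = √(W₁₂² + T₁₂²)`. Two independent estimates combine to the inequality.

Since `f = tan (arctan · / 2)`, the point `(W₁₂, T₁₂)` has polar angle `θ` between `α = arctan L₁₂`
and `β = arctan U₁₂`, and the coefficients `(1 - pq)/(1 + pq)`, `(p + q)/(1 + pq)` (with `p = f L₁₂`,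
`q = f U₁₂`) are `cos((α+β)/2)/cos((β-α)/2)` and `sin((α+β)/2)/cos((β-α)/2)`: the linear form is the
chord of the unit circle between the angles `α` and `β`, so it dominates the radius `√(W₁₂² + T₁₂²)`
on the sector. Algebraically, with `t = f (T₁₂ / W₁₂)` and `r` the radius,
`(1 - pq) W₁₂ + (p + q) T₁₂ - (1 + pq) r = (W₁₂ + r) (t - p) (q - t) ≥ 0`.

The remaining polynomial inequality in `a, b, c, d, x, y` is the identity
`(a+b)(c+d)xy - (c² + cd)x² - (a² + ab)y² + a²c² - abcd
  = c(c+d)(x-a)(b-x) + a(a+b)(y-c)(d-y) + (a+b)(c+d)(x-a)(y-c)`.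
-/

open Real

lemma f_eq_div (x : ℝ) : f x = x / (1 + √(1 + x ^ 2)) := by
  unfold f
  rcases eq_or_ne x 0 with rfl | hx
  · simp
  · rw [if_neg hx]
    have hs : √(1 + x ^ 2) ^ 2 = 1 + x ^ 2 := sq_sqrt (by positivity)
    have hs0 : 0 < 1 + √(1 + x ^ 2) := by positivity
    field_simp
    linear_combination hs

lemma f_sq_lt_one (x : ℝ) : f x ^ 2 < 1 := by
  have hs : √(1 + x ^ 2) ^ 2 = 1 + x ^ 2 := sq_sqrt (by positivity)
  have hs0 : 0 ≤ √(1 + x ^ 2) := sqrt_nonneg _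
  rw [f_eq_div, div_pow, div_lt_one (by positivity)]
  nlinarith

lemma one_add_f_mul_f_pos (x y : ℝ) : 0 < 1 + f x * f y := by
  nlinarith [f_sq_lt_one x, f_sq_lt_one y, sq_nonneg (f x + f y)]

lemma mul_one_sub_f_sq (x : ℝ) : x * (1 - f x ^ 2) = 2 * f x := by
  have hs : √(1 + x ^ 2) ^ 2 = 1 + x ^ 2 := sq_sqrt (by positivity)
  have hs0 : 0 < 1 + √(1 + x ^ 2) := by positivity
  rw [f_eq_div]
  field_simp
  linear_combination x * hs

lemma f_monotone : Monotone f := by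
  -- `f` inverts `t ↦ 2t / (1 - t²)`, which is increasing on `(-1, 1)`.
  intro a b hab
  by_contra! hlt
  have key : (b - a) * (1 - f a ^ 2) * (1 - f b ^ 2) = 2 * (f b - f a) * (1 + f a * f b) := by
    linear_combination (1 - f a ^ 2) * mul_one_sub_f_sq b - (1 - f b ^ 2) * mul_one_sub_f_sq a
  have hlhs : 0 ≤ (b - a) * (1 - f a ^ 2) * (1 - f b ^ 2) := by
    have := f_sq_lt_one a
    have := f_sq_lt_one b
    apply mul_nonneg (mul_nonneg _ _) <;> linarith
  have hrhs : 2 * (f b - f a) * (1 + f a * f b) < 0 :=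
    mul_neg_of_neg_of_pos (by linarith) (one_add_f_mul_f_pos a b)
  linarith

lemma f_div_eq {W : ℝ} (T : ℝ) (hW : 0 < W) : f (T / W) = T / (W + √(W ^ 2 + T ^ 2)) := by
  have hr : √(1 + (T / W) ^ 2) = √(W ^ 2 + T ^ 2) / W := by
    rw [show 1 + (T / W) ^ 2 = (W ^ 2 + T ^ 2) / W ^ 2 by field_simp, sqrt_div' _ (sq_nonneg W),
      sqrt_sq hW.le]
  rw [f_eq_div, hr]
  field_simp

lemma sqrt_sq_add_sq_le {L U W T : ℝ} (hW : 0 ≤ W) (hLT : L * W ≤ T) (hTU : T ≤ U * W) :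
    √(W ^ 2 + T ^ 2) ≤
      (1 - f L * f U) / (1 + f L * f U) * W + (f L + f U) / (1 + f L * f U) * T := by
  rcases hW.eq_or_lt with rfl | hW
  · obtain rfl : T = 0 := by linarith
    simp
  set p := f L
  set q := f U
  set r := √(W ^ 2 + T ^ 2)
  set t := f (T / W) with ht
  have hr2 : r ^ 2 = W ^ 2 + T ^ 2 := sq_sqrt (by positivity)
  have hWr : 0 < W + r := by positivity
  have hT : T = t * (W + r) := by rw [ht, f_div_eq T hW, div_mul_cancel₀ _ hWr.ne']
  have hpt : p ≤ t := f_monotone ((le_div_iff₀ hW).2 hLT)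
  have htq : t ≤ q := f_monotone ((div_le_iff₀ hW).2 hTU)
  have hrW : r - W = t ^ 2 * (W + r) := by
    apply mul_right_cancel₀ hWr.ne'
    linear_combination hr2 + (T + t * (W + r)) * hT
  have key : (1 - p * q) * W + (p + q) * T - (1 + p * q) * r = (W + r) * (t - p) * (q - t) := by
    linear_combination (p + q) * hT - hrW
  have hchord : (1 + p * q) * r ≤ (1 - p * q) * W + (p + q) * T := by
    have : 0 ≤ (W + r) * (t - p) * (q - t) :=
      mul_nonneg (mul_nonneg hWr.le (by linarith)) (by linarith)
    linarith
  rw [div_mul_eq_mul_div, div_mul_eq_mul_div, ← add_div, le_div_iff₀ (one_add_f_mul_f_pos L U)]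
  linarith

lemma sq_envelope_le_mul {a b c d x y : ℝ} (ha : 0 ≤ a) (hc : 0 ≤ c)
    (hax : a ≤ x) (hxb : x ≤ b) (hcy : c ≤ y) (hyd : y ≤ d) :
    c ^ 2 * x ^ 2 + a ^ 2 * y ^ 2 - a ^ 2 * c ^ 2 + a * b * c * d + c * d * x ^ 2 + a * b * y ^ 2
      ≤ (a + b) * (c + d) * (x * y) := by
  have hx : 0 ≤ (x - a) * (b - x) := mul_nonneg (by linarith) (by linarith)
  have hy : 0 ≤ (y - c) * (d - y) := mul_nonneg (by linarith) (by linarith)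
  have hxy : 0 ≤ (x - a) * (y - c) := mul_nonneg (by linarith) (by linarith)
  have hab : 0 ≤ a + b := by linarith
  have hcd : 0 ≤ c + d := by linarith
  linarith [mul_nonneg (mul_nonneg hc hcd) hx, mul_nonneg (mul_nonneg ha hab) hy,
    mul_nonneg (mul_nonneg hab hcd) hxy]

lemma envelope_le_sqrt_mul {L₁ U₁ L₂ U₂ W₁₁ W₂₂ : ℝ} (hL₁ : 0 ≤ L₁) (hL₂ : 0 ≤ L₂)
    (h1 : L₁ ≤ W₁₁) (h2 : W₁₁ ≤ U₁) (h3 : L₂ ≤ W₂₂) (h4 : W₂₂ ≤ U₂) :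
    L₂ * W₁₁ + L₁ * W₂₂ - L₁ * L₂ + √(L₁ * L₂ * U₁ * U₂) + √(L₂ * U₂) * W₁₁ + √(L₁ * U₁) * W₂₂
      ≤ (√L₁ + √U₁) * (√L₂ + √U₂) * √(W₁₁ * W₂₂) := by
  have hW₁₁ : 0 ≤ W₁₁ := hL₁.trans h1
  have hW₂₂ : 0 ≤ W₂₂ := hL₂.trans h3
  have hU₁ : 0 ≤ U₁ := hW₁₁.trans h2
  have hU₂ : 0 ≤ U₂ := hW₂₂.trans h4
  have key := sq_envelope_le_mul (sqrt_nonneg L₁) (sqrt_nonneg L₂)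
    (sqrt_le_sqrt h1) (sqrt_le_sqrt h2) (sqrt_le_sqrt h3) (sqrt_le_sqrt h4)
  rw [sq_sqrt hL₁, sq_sqrt hL₂, sq_sqrt hW₁₁, sq_sqrt hW₂₂] at key
  rw [sqrt_mul (by positivity), sqrt_mul (by positivity), sqrt_mul hL₁, sqrt_mul hL₂,
    sqrt_mul hL₁, sqrt_mul hW₁₁]
  linarith

theorem valid_inequality_lower_general (L₁ U₁ L₂ U₂ L₁₂ U₁₂ W₁₁ W₂₂ W₁₂ T₁₂ : ℝ)
    (hL₁ : 0 ≤ L₁) (hL₂ : 0 ≤ L₂)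
    (h1 : L₁ ≤ W₁₁) (h2 : W₁₁ ≤ U₁) (h3 : L₂ ≤ W₂₂) (h4 : W₂₂ ≤ U₂)
    (h5 : L₁₂ * W₁₂ ≤ T₁₂) (h6 : T₁₂ ≤ U₁₂ * W₁₂) (h7 : 0 ≤ W₁₂)
    (h8 : W₁₁ * W₂₂ = W₁₂ ^ 2 + T₁₂ ^ 2) :
    -Real.sqrt (L₁ * L₂ * U₁ * U₂)
      + (-Real.sqrt (L₂ * U₂)) * W₁₁ + (-Real.sqrt (L₁ * U₁)) * W₂₂
      + ((Real.sqrt L₁ + Real.sqrt U₁) * (Real.sqrt L₂ + Real.sqrt U₂)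
          * ((1 - f L₁₂ * f U₁₂) / (1 + f L₁₂ * f U₁₂))) * W₁₂
      + ((Real.sqrt L₁ + Real.sqrt U₁) * (Real.sqrt L₂ + Real.sqrt U₂)
          * ((f L₁₂ + f U₁₂) / (1 + f L₁₂ * f U₁₂))) * T₁₂
      ≥ L₂ * W₁₁ + L₁ * W₂₂ - L₁ * L₂ := by
  have henv := envelope_le_sqrt_mul hL₁ hL₂ h1 h2 h3 h4
  have hchord := sqrt_sq_add_sq_le h7 h5 h6
  rw [← h8] at hchord
  have hK : 0 ≤ (√L₁ + √U₁) * (√L₂ + √U₂) := by positivity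
  linarith [mul_le_mul_of_nonneg_left hchord hK]

theorem valid_inequality_lower (L₁ U₁ L₂ U₂ L₁₂ U₁₂ W₁₁ W₂₂ W₁₂ T₁₂ : ℝ)
    (hL₁ : 0 ≤ L₁) (hU₁ : L₁ ≤ U₁) (hL₂ : 0 ≤ L₂) (hU₂ : L₂ ≤ U₂) (hLU : L₁₂ ≤ U₁₂)
    (h1 : L₁ ≤ W₁₁) (h2 : W₁₁ ≤ U₁) (h3 : L₂ ≤ W₂₂) (h4 : W₂₂ ≤ U₂)
    (h5 : L₁₂ * W₁₂ ≤ T₁₂) (h6 : T₁₂ ≤ U₁₂ * W₁₂) (h7 : 0 ≤ W₁₂)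
    (h8 : W₁₁ * W₂₂ = W₁₂ ^ 2 + T₁₂ ^ 2) :
    -Real.sqrt (L₁ * L₂ * U₁ * U₂)
      + (-Real.sqrt (L₂ * U₂)) * W₁₁ + (-Real.sqrt (L₁ * U₁)) * W₂₂
      + ((Real.sqrt L₁ + Real.sqrt U₁) * (Real.sqrt L₂ + Real.sqrt U₂)
          * ((1 - f L₁₂ * f U₁₂) / (1 + f L₁₂ * f U₁₂))) * W₁₂
      + ((Real.sqrt L₁ + Real.sqrt U₁) * (Real.sqrt L₂ + Real.sqrt U₂)
          * ((f L₁₂ + f U₁₂) / (1 + f L₁₂ * f U₁₂))) * T₁₂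
      ≥ L₂ * W₁₁ + L₁ * W₂₂ - L₁ * L₂ :=
  valid_inequality_lower_general L₁ U₁ L₂ U₂ L₁₂ U₁₂ W₁₁ W₂₂ W₁₂ T₁₂ hL₁ hL₂ h1 h2 h3 h4 h5 h6 h7 h8
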